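/- arXiv:1908.03788 — 4 statements merged into one kernel-verified Lean document; each statement's English description precedes it below -/
import Mathlib

section
/- Every finite nonempty graph has an avoidable vertex. -/
variable {V : Type*}

/-- `p` is an induced path on `k` vertices in `G`: injective, and adjacency holds
exactly between consecutive vertices. -/
def IsInducedPathOn (G : SimpleGraph V) (k : ℕ) (p : Fin k → V) : Prop :=
  Function.Injective p ∧
    ∀ i j : Fin k, G.Adj (p i) (p j) ↔ (i.val + 1 = j.val ∨ j.val + 1 = i.val)

/-- `c` is an induced cycle on `n ≥ 3` vertices in `G`: injective, and adjacency holds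
exactly between cyclically consecutive vertices. -/
def IsInducedCycleOn (G : SimpleGraph V) (n : ℕ) (c : Fin n → V) : Prop :=
  3 ≤ n ∧ Function.Injective c ∧
    ∀ i j : Fin n, G.Adj (c i) (c j) ↔ ((i.val + 1) % n = j.val ∨ (j.val + 1) % n = i.val)

/-- The vertices of `q` all lie on some induced cycle of `G`. -/
def InInducedCycle (G : SimpleGraph V) {m : ℕ} (q : Fin m → V) : Prop :=
  ∃ (n : ℕ) (c : Fin n → V), IsInducedCycleOn G n c ∧ Set.range q ⊆ Set.range c

/-- `q` is an extension of the induced path `p`: an induced path on `k+2` vertices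
whose middle `k` vertices are `p` (one new vertex at each end). -/
def IsExtension (G : SimpleGraph V) {k : ℕ} (p : Fin k → V) (q : Fin (k + 2) → V) : Prop :=
  IsInducedPathOn G (k + 2) q ∧ ∀ i : Fin k, q i.succ.castSucc = p i

/-- `p` is an avoidable path in `G`: an induced path each of whose extensions lies on an
induced cycle of `G`. -/
def IsAvoidable (G : SimpleGraph V) {k : ℕ} (p : Fin k → V) : Prop :=
  IsInducedPathOn G k p ∧
    ∀ q : Fin (k + 2) → V, IsExtension G p q → InInducedCycle G q

/-- `v` is an avoidable vertex: every induced path `x–v–y` lies on an induced cycle. -/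
def AvoidableVertex (G : SimpleGraph V) (v : V) : Prop :=
  ∀ x y : V, G.Adj x v → G.Adj v y → x ≠ y → ¬ G.Adj x y → InInducedCycle G ![x, v, y]

/-- `v` lies outside the closed neighbourhood of `w`. -/
def OutsideClosedNbhd (G : SimpleGraph V) (w v : V) : Prop :=
  v ≠ w ∧ ¬ G.Adj w v

/-- Property `H_R(G,k,w)`: either `G − N[w]` has no induced path on `k` vertices,
or there is an induced path on `k` vertices inside `G − N[w]` avoidable in `G`. -/
def HR (G : SimpleGraph V) (k : ℕ) (w : V) : Prop :=
  (¬ ∃ p : Fin k → V, IsInducedPathOn G k p ∧ ∀ i, OutsideClosedNbhd G w (p i)) ∨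
  (∃ p : Fin k → V, IsInducedPathOn G k p ∧ (∀ i, OutsideClosedNbhd G w (p i)) ∧
    ∀ q : Fin (k + 2) → V, IsExtension G p q → InInducedCycle G q)

/-- The graph obtained from `G` by merging adjacent vertices `u₁, u₂` into one vertex
(represented by `u₁`, with `u₂` becoming an isolated stray vertex). -/
def mergeGraph (G : SimpleGraph V) (u₁ u₂ : V) : SimpleGraph V where
  Adj a b := a ≠ b ∧ a ≠ u₂ ∧ b ≠ u₂ ∧
    (G.Adj a b ∨ (a = u₁ ∧ G.Adj u₂ b) ∨ (b = u₁ ∧ G.Adj a u₂))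
  symm := by
    constructor
    rintro a b ⟨h1, h2, h3, h4⟩
    refine ⟨h1.symm, h3, h2, ?_⟩
    rcases h4 with h | ⟨ha, h⟩ | ⟨hb, h⟩
    · exact Or.inl h.symm
    · exact Or.inr (Or.inr ⟨ha, h.symm⟩)
    · exact Or.inr (Or.inl ⟨hb, h.symm⟩)
  loopless := ⟨fun a h => h.1 rfl⟩

/-- `G` is chordal: every induced cycle has exactly three vertices. -/
def Chordal (G : SimpleGraph V) : Prop :=
  ∀ (n : ℕ) (c : Fin n → V), IsInducedCycleOn G n c → n = 3

/-- `v` is a simplicial vertex: its neighbourhood is a clique. -/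
def SimplicialVertex (G : SimpleGraph V) (v : V) : Prop :=
  ∀ x y : V, G.Adj v x → G.Adj v y → x ≠ y → G.Adj x y

/-!
We prove the stronger statement that for every `A` and every `w ∈ A` with a non-neighbour
`u ∈ A`, some vertex of `A` outside `N[w]` is avoidable in `G[A]`, by induction on `A`.
Let `C` be the component of `G[A] - N[w]` containing `u` and `S` the neighbours of `w` in `A`
that have a neighbour in `C`. Neighbours of a vertex of `C` lie in `S ∪ C`, and two of them in
`S` are joined through `w`. If `S` is complete to `C`, an avoidable vertex of `G[C]` is
avoidable in `G[A]`. Otherwise pick `s ∈ S` and `c ∈ C` non-adjacent, turn `S` into a clique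
and apply induction to `S ∪ C` with `s` and `c`: the vertex found lies in `C`, and every edge
of `S` on a connecting walk can be rerouted through `w`.

Avoidability is carried through the induction as connectivity: non-adjacent neighbours `x, y`
of `v` are joined by a walk avoiding `N[v]`; a shortest such walk closes up with `v` into an
induced cycle.
-/

namespace SimpleGraph

variable {G : SimpleGraph V}

-- `G[T]` as a graph on all of `V`: vertices outside `T` become isolated.
def restrict (G : SimpleGraph V) (T : Set V) : SimpleGraph V where
  Adj a b := G.Adj a b ∧ a ∈ T ∧ b ∈ T
  symm := ⟨fun _ _ h => ⟨h.1.symm, h.2.2, h.2.1⟩⟩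
  loopless := ⟨fun _ h => G.irrefl h.1⟩

@[simp]
theorem restrict_adj {T : Set V} {a b : V} :
    (G.restrict T).Adj a b ↔ G.Adj a b ∧ a ∈ T ∧ b ∈ T :=
  Iff.rfl

theorem restrict_mono {T T' : Set V} (h : T ⊆ T') : G.restrict T ≤ G.restrict T' :=
  fun _ _ hab => ⟨hab.1, h hab.2.1, h hab.2.2⟩

theorem Walk.getVert_mem_of_restrict {T : Set V} {x y : V} (p : (G.restrict T).Walk x y)
    (hx : x ∈ T) (i : ℕ) : p.getVert i ∈ T := by
  induction p generalizing i with
  | nil => exact hx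
  | cons h q ih =>
    cases i with
    | zero => exact hx
    | succ i => exact ih h.2.2 i

theorem Reachable.mem_of_restrict {T : Set V} {x y : V} (h : (G.restrict T).Reachable x y)
    (hx : x ∈ T) : y ∈ T :=
  h.elim fun p => p.getVert_length ▸ p.getVert_mem_of_restrict hx p.length

def closedNeighborSet (G : SimpleGraph V) (v : V) : Set V := insert v (G.neighborSet v)

@[simp]
theorem mem_closedNeighborSet {v w : V} : w ∈ G.closedNeighborSet v ↔ w = v ∨ G.Adj v w :=
  Iff.rfl

theorem mem_closedNeighborSet_comm {v w : V} :
    w ∈ G.closedNeighborSet v ↔ v ∈ G.closedNeighborSet w := by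
  simp [eq_comm, G.adj_comm]

theorem _root_.Nat.add_one_mod_eq_iff {m a b : ℕ} (ha : a < m) (hb : b < m) :
    (a + 1) % m = b ↔ a + 1 = b ∨ a + 1 = m ∧ b = 0 := by
  rcases Nat.lt_or_ge (a + 1) m with h | h
  · rw [Nat.mod_eq_of_lt h]; omega
  · rw [show a + 1 = m by omega, Nat.mod_self]; omega

theorem isInducedCycleOn_cons {n : ℕ} {p : Fin (n + 1) → V} {v : V}
    (hp : IsInducedPathOn G (n + 1) p) (hn : 2 ≤ n) (hv : v ∉ Set.range p)
    (hadj : ∀ i, G.Adj v (p i) ↔ i = 0 ∨ i = Fin.last n) :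
    IsInducedCycleOn G (n + 2) (Fin.cons v p : Fin (n + 2) → V) := by
  refine ⟨by omega, Fin.cons_injective_iff.mpr ⟨hv, hp.1⟩, fun i j => ?_⟩
  rw [Nat.add_one_mod_eq_iff i.isLt j.isLt, Nat.add_one_mod_eq_iff j.isLt i.isLt]
  cases i using Fin.cases with
  | zero =>
    cases j using Fin.cases with
    | zero => simp
    | succ j =>
      simp only [Fin.cons_zero, Fin.cons_succ, hadj, Fin.ext_iff, Fin.val_succ, Fin.val_zero,
        Fin.val_last, and_true]
      omega
  | succ i =>
    cases j using Fin.cases with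
    | zero =>
      simp only [Fin.cons_zero, Fin.cons_succ, G.adj_comm _ v, hadj, Fin.ext_iff, Fin.val_succ,
        Fin.val_zero, Fin.val_last, and_true]
      omega
    | succ j =>
      simp only [Fin.cons_succ, hp.2, Fin.val_succ]
      omega

theorem Walk.eq_add_one_of_adj_getVert {x y : V} {p : G.Walk x y} (hp : p.length = G.dist x y)
    {i j : ℕ} (hij : i < j) (hj : j ≤ p.length) (h : G.Adj (p.getVert i) (p.getVert j)) :
    j = i + 1 := by
  have hshort := G.dist_le ((p.take i).append (.cons h (p.drop j)))
  simp only [length_append, take_length, length_cons, drop_length] at hshort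
  omega

theorem Walk.isInducedPathOn_getVert {x y : V} (p : G.Walk x y) (hp : p.length = G.dist x y) :
    IsInducedPathOn G (p.length + 1) (fun i => p.getVert i) := by
  refine ⟨fun i j h => Fin.ext ((p.isPath_of_length_eq_dist hp).getVert_injOn
    (by simp; omega) (by simp; omega) h), fun i j => ⟨fun h => ?_, ?_⟩⟩
  · rcases lt_trichotomy i.val j.val with hij | hij | hij
    · exact .inl (p.eq_add_one_of_adj_getVert hp hij (by omega) h).symm
    · exact absurd (Fin.ext hij ▸ h) G.irrefl
    · exact .inr (p.eq_add_one_of_adj_getVert hp hij (by omega) h.symm).symm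
  · rintro (h | h)
    · simpa [← h] using p.adj_getVert_succ (i := i) (by omega)
    · simpa [← h] using (p.adj_getVert_succ (i := j) (by omega)).symm

theorem _root_.IsInducedPathOn.of_restrict {T : Set V} {k : ℕ} {p : Fin k → V}
    (h : IsInducedPathOn (G.restrict T) k p) (hT : ∀ i, p i ∈ T) : IsInducedPathOn G k p :=
  ⟨h.1, fun i j => by simpa [hT] using h.2 i j⟩


theorem inInducedCycle_of_reachable_restrict {T : Set V} {v x y : V}
    (h : (G.restrict T).Reachable x y) (hxT : x ∈ T) (hvT : v ∉ T)
    (hT : ∀ t ∈ T, G.Adj v t → t = x ∨ t = y)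
    (hvx : G.Adj v x) (hvy : G.Adj v y) (hxy : x ≠ y) (hn : ¬ G.Adj x y) :
    InInducedCycle G ![x, v, y] := by
  obtain ⟨p, hp⟩ := h.exists_walk_length_eq_dist
  have hmem := p.getVert_mem_of_restrict hxT
  have hpath := (p.isInducedPathOn_getVert hp).of_restrict fun i => hmem i
  have hlen : 2 ≤ p.length := by
    have h0 : (G.restrict T).dist x y ≠ 0 := by simp [h.dist_eq_zero_iff, hxy]
    have h1 : (G.restrict T).dist x y ≠ 1 := fun h1 => hn (dist_eq_one_iff_adj.mp h1).1
    omega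
  refine ⟨p.length + 2, Fin.cons v fun i => p.getVert i,
    isInducedCycleOn_cons hpath hlen ?_ fun i => ⟨fun hvi => ?_, ?_⟩, ?_⟩
  · rintro ⟨i, hi⟩
    exact hvT (hi ▸ hmem i)
  · rcases hT _ (hmem i) hvi with hi | hi
    · exact .inl (hpath.1 (by simpa using hi))
    · exact .inr (hpath.1 (by simpa using hi))
  · rintro (rfl | rfl) <;> simpa
  · rintro _ ⟨i, rfl⟩
    fin_cases i
    · exact ⟨1, by simp⟩
    · exact ⟨0, rfl⟩
    · exact ⟨Fin.last _, by simp⟩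

def addClique (G : SimpleGraph V) (S : Set V) : SimpleGraph V :=
  G ⊔ (⊤ : SimpleGraph V).restrict S

@[simp]
theorem addClique_adj {S : Set V} {a b : V} :
    (G.addClique S).Adj a b ↔ G.Adj a b ∨ a ≠ b ∧ a ∈ S ∧ b ∈ S :=
  Iff.rfl

def JoinedAvoiding (G : SimpleGraph V) (A : Set V) (v x y : V) : Prop :=
  (G.restrict (insert x (insert y (A \ G.closedNeighborSet v)))).Reachable x y

def AvoidableIn (G : SimpleGraph V) (A : Set V) (v : V) : Prop :=
  ∀ ⦃x⦄, x ∈ A → ∀ ⦃y⦄, y ∈ A → G.Adj v x → G.Adj v y → x ≠ y → ¬ G.Adj x y →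
    G.JoinedAvoiding A v x y

section Avoiding

variable {A B : Set V} {v w x y : V}

theorem JoinedAvoiding.inInducedCycle (h : G.JoinedAvoiding A v x y)
    (hvx : G.Adj v x) (hvy : G.Adj v y) (hxy : x ≠ y) (hn : ¬ G.Adj x y) :
    InInducedCycle G ![x, v, y] :=
  inInducedCycle_of_reachable_restrict h (Set.mem_insert _ _)
    (by simp [hvx.ne, hvy.ne])
    (fun _ _ _ => by simp_all) hvx hvy hxy hn

theorem JoinedAvoiding.mono (h : G.JoinedAvoiding A v x y) (hAB : A ⊆ B) :
    G.JoinedAvoiding B v x y :=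
  Reachable.mono (restrict_mono (Set.insert_subset_insert (Set.insert_subset_insert
    (Set.sdiff_subset_sdiff_left hAB)))) h

theorem joinedAvoiding_of_adj_adj (hw : w ∈ A \ G.closedNeighborSet v) (hxw : G.Adj x w)
    (hwy : G.Adj w y) : G.JoinedAvoiding A v x y := by
  have hwT : w ∈ insert x (insert y (A \ G.closedNeighborSet v)) := by simp [hw]
  exact (Adj.reachable (G := G.restrict _) ⟨hxw, by simp, hwT⟩).trans
    (Adj.reachable ⟨hwy, hwT, by simp⟩)

theorem JoinedAvoiding.of_addClique {S : Set V}
    (h : (G.addClique S).JoinedAvoiding A v x y) (hAB : A ⊆ B)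
    (hw : w ∈ B \ G.closedNeighborSet v) (hS : S ⊆ G.neighborSet w) :
    G.JoinedAvoiding B v x y := by
  have hsub : insert x (insert y (A \ (G.addClique S).closedNeighborSet v)) ⊆
      insert x (insert y (B \ G.closedNeighborSet v)) := by
    refine Set.insert_subset_insert (Set.insert_subset_insert fun t ⟨htA, ht⟩ => ⟨hAB htA, ?_⟩)
    simp_all
  have hwT : w ∈ insert x (insert y (B \ G.closedNeighborSet v)) := by simp [hw]
  rw [JoinedAvoiding, reachable_iff_reflTransGen] at h ⊢
  refine Relation.ReflTransGen.lift' (p := (G.restrict _).Adj) id ?_ _ _ h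
  rintro a b ⟨hab, ha, hb⟩
  rw [Function.onFun, id, id, ← reachable_iff_reflTransGen]
  rcases hab with hab | ⟨-, haS, hbS⟩
  · exact Adj.reachable ⟨hab, hsub ha, hsub hb⟩
  · exact (Adj.reachable (G := G.restrict _) ⟨(hS haS).symm, hsub ha, hwT⟩).trans
      (Adj.reachable ⟨hS hbS, hwT, hsub hb⟩)

theorem avoidableIn_of_isClique (h : G.IsClique A) : G.AvoidableIn A v :=
  fun _ hx _ hy _ _ hxy hn => absurd (h hx hy hxy) hn

theorem AvoidableIn.avoidableVertex (h : G.AvoidableIn Set.univ v) : AvoidableVertex G v :=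
  fun _ _ hxv hvy hxy hn =>
    (h trivial trivial hxv.symm hvy hxy hn).inInducedCycle hxv.symm hvy hxy hn

end Avoiding

section Component

variable (G) (A : Set V) (w u : V)

-- The sets `C` and `S` of the proof sketch.
def outerComponent : Set V := {a | (G.restrict (A \ G.closedNeighborSet w)).Reachable u a}

def attachment : Set V := {s ∈ A | G.Adj w s ∧ ∃ c ∈ G.outerComponent A w u, G.Adj s c}

variable {G A w u} {v : V}

theorem mem_outerComponent_self : u ∈ G.outerComponent A w u := Reachable.refl u

theorem outerComponent_subset (hu : u ∈ A \ G.closedNeighborSet w) :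
    G.outerComponent A w u ⊆ A \ G.closedNeighborSet w :=
  fun _ h => h.mem_of_restrict hu

theorem mem_diff_closedNeighborSet_of_mem_outerComponent (hu : u ∈ A \ G.closedNeighborSet w)
    (hw : w ∈ A) (hv : v ∈ G.outerComponent A w u) : w ∈ A \ G.closedNeighborSet v :=
  ⟨hw, mem_closedNeighborSet_comm.not.mp (outerComponent_subset hu hv).2⟩

theorem attachment_union_outerComponent_ssubset (hu : u ∈ A \ G.closedNeighborSet w)
    (hw : w ∈ A) : G.attachment A w u ∪ G.outerComponent A w u ⊂ A := by
  refine (Set.ssubset_iff_of_subset (Set.union_subset (fun _ h => h.1)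
    ((outerComponent_subset hu).trans Set.sdiff_subset))).mpr ⟨w, hw, ?_⟩
  rintro (h | h)
  · exact G.irrefl h.2.1
  · exact (outerComponent_subset hu h).2 (.inl rfl)

theorem notMem_attachment_of_mem_outerComponent (hu : u ∈ A \ G.closedNeighborSet w)
    (hv : v ∈ G.outerComponent A w u) : v ∉ G.attachment A w u :=
  fun h => (outerComponent_subset hu hv).2 (.inr h.2.1)

theorem mem_attachment_union_of_adj (hu : u ∈ A \ G.closedNeighborSet w)
    (hv : v ∈ G.outerComponent A w u) {t : V} (ht : t ∈ A) (hvt : G.Adj v t) :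
    t ∈ G.attachment A w u ∪ G.outerComponent A w u := by
  by_cases hwt : G.Adj w t
  · exact .inl ⟨ht, hwt, v, hv, hvt.symm⟩
  · have hvX := outerComponent_subset hu hv
    have htX : t ∈ A \ G.closedNeighborSet w := by
      refine ⟨ht, ?_⟩
      rintro (rfl | h)
      · exact hvX.2 (.inr hvt.symm)
      · exact hwt h
    exact .inr (Reachable.trans hv (Adj.reachable ⟨hvt, hvX, htX⟩))

theorem avoidableIn_of_mem_outerComponent (hu : u ∈ A \ G.closedNeighborSet w) (hw : w ∈ A)
    (hv : v ∈ G.outerComponent A w u)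
    (h : ∀ ⦃x⦄, x ∈ G.attachment A w u ∪ G.outerComponent A w u →
      ∀ ⦃y⦄, y ∈ G.attachment A w u ∪ G.outerComponent A w u →
      G.Adj v x → G.Adj v y → x ≠ y → ¬ G.Adj x y →
      (x ∈ G.attachment A w u → y ∉ G.attachment A w u) → G.JoinedAvoiding A v x y) :
    G.AvoidableIn A v := by
  intro x hx y hy hvx hvy hxy hn
  by_cases hS : x ∈ G.attachment A w u ∧ y ∈ G.attachment A w u
  · exact joinedAvoiding_of_adj_adj (mem_diff_closedNeighborSet_of_mem_outerComponent hu hw hv)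
      hS.1.2.1.symm hS.2.2.1
  · exact h (mem_attachment_union_of_adj hu hv hx hvx)
      (mem_attachment_union_of_adj hu hv hy hvy) hvx hvy hxy hn fun hxS hyS => hS ⟨hxS, hyS⟩

theorem AvoidableIn.of_outerComponent (hu : u ∈ A \ G.closedNeighborSet w) (hw : w ∈ A)
    (hSC : ∀ s ∈ G.attachment A w u, ∀ c ∈ G.outerComponent A w u, G.Adj s c)
    (hv : v ∈ G.outerComponent A w u) (hav : G.AvoidableIn (G.outerComponent A w u) v) :
    G.AvoidableIn A v := by
  refine avoidableIn_of_mem_outerComponent hu hw hv fun x hx y hy hvx hvy hxy hn hS => ?_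
  rcases hx with hxS | hxC
  · exact absurd (hSC x hxS y (hy.resolve_left (hS hxS))) hn
  rcases hy with hyS | hyC
  · exact absurd (hSC y hyS x hxC).symm hn
  exact (hav hxC hyC hvx hvy hxy hn).mono ((outerComponent_subset hu).trans Set.sdiff_subset)

theorem AvoidableIn.of_addClique (hu : u ∈ A \ G.closedNeighborSet w) (hw : w ∈ A) {s : V}
    (hs : s ∈ G.attachment A w u) (hv : v ∈ G.attachment A w u ∪ G.outerComponent A w u)
    (hvs : v ∉ (G.addClique (G.attachment A w u)).closedNeighborSet s)
    (hav : (G.addClique (G.attachment A w u)).AvoidableIn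
      (G.attachment A w u ∪ G.outerComponent A w u) v) :
    v ∈ G.outerComponent A w u ∧ G.AvoidableIn A v := by
  have hvC : v ∈ G.outerComponent A w u :=
    hv.resolve_left fun hvS => hvs (.inr (.inr ⟨fun hsv => hvs (.inl hsv.symm), hs, hvS⟩))
  refine ⟨hvC, avoidableIn_of_mem_outerComponent hu hw hvC
    fun x hx y hy hvx hvy hxy hn hS => ?_⟩
  have hnH : ¬ (G.addClique (G.attachment A w u)).Adj x y := by
    rintro (hxy | ⟨-, hxS, hyS⟩)
    exacts [hn hxy, hS hxS hyS]
  exact (hav hx hy (.inl hvx) (.inl hvy) hxy hnH).of_addClique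
    (attachment_union_outerComponent_ssubset hu hw).subset
    (mem_diff_closedNeighborSet_of_mem_outerComponent hu hw hvC) fun _ h => h.2.1

end Component

theorem exists_avoidableIn_of_forall {A : Set V} (hA : A.Nonempty)
    (h : ∀ w ∈ A, ∀ u ∈ A \ G.closedNeighborSet w, ∃ v ∈ A, G.AvoidableIn A v) :
    ∃ v ∈ A, G.AvoidableIn A v := by
  by_cases hA' : G.IsClique A
  · obtain ⟨v, hv⟩ := hA
    exact ⟨v, hv, avoidableIn_of_isClique hA'⟩
  · obtain ⟨w, hw, u, hu, huw, hn⟩ : ∃ w ∈ A, ∃ u ∈ A, w ≠ u ∧ ¬ G.Adj w u := by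
      simpa [IsClique, Set.Pairwise] using hA'
    exact h w hw u ⟨hu, by simp [huw.symm, hn]⟩

theorem exists_avoidableIn_diff_closedNeighborSet [Finite V] {A : Set V} {w u : V} (hw : w ∈ A)
    (hu : u ∈ A \ G.closedNeighborSet w) : ∃ v ∈ A \ G.closedNeighborSet w, G.AvoidableIn A v := by
  induction A using WellFoundedLT.induction generalizing G w u with
  | ind A ih =>
  have hSC := attachment_union_outerComponent_ssubset hu hw
  by_cases hcomplete : ∀ s ∈ G.attachment A w u, ∀ c ∈ G.outerComponent A w u, G.Adj s c
  · obtain ⟨v, hvC, hav⟩ := exists_avoidableIn_of_forall ⟨u, mem_outerComponent_self⟩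
      fun a ha b hb => (ih _ (Set.subset_union_right.trans_ssubset hSC) ha hb).imp
        fun _ hv => ⟨hv.1.1, hv.2⟩
    exact ⟨v, outerComponent_subset hu hvC, hav.of_outerComponent hu hw hcomplete hvC⟩
  · push Not at hcomplete
    obtain ⟨s, hs, c, hc, hsc⟩ := hcomplete
    have hcS := notMem_attachment_of_mem_outerComponent hu hc
    have hcs : c ∈ (G.attachment A w u ∪ G.outerComponent A w u) \
        (G.addClique (G.attachment A w u)).closedNeighborSet s := by
      refine ⟨.inr hc, ?_⟩
      rintro (rfl | hsc' | ⟨-, -, hcS'⟩)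
      exacts [hcS hs, hsc hsc', hcS hcS']
    obtain ⟨v, ⟨hv, hvs⟩, hav⟩ := ih _ hSC (.inl hs) hcs
    obtain ⟨hvC, hav⟩ := hav.of_addClique hu hw hs hv hvs
    exact ⟨v, outerComponent_subset hu hvC, hav⟩

theorem exists_avoidableIn [Finite V] (G : SimpleGraph V) {A : Set V} (hA : A.Nonempty) :
    ∃ v ∈ A, G.AvoidableIn A v :=
  exists_avoidableIn_of_forall hA fun _ hw _ hu =>
    (exists_avoidableIn_diff_closedNeighborSet hw hu).imp fun _ hv => ⟨hv.1.1, hv.2⟩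

end SimpleGraph

/-- Every finite nonempty graph has an avoidable vertex. -/
theorem stmt0 [Fintype V] [Nonempty V] (G : SimpleGraph V) :
    ∃ v : V, AvoidableVertex G v :=
  let ⟨v, _, hv⟩ := G.exists_avoidableIn Set.univ_nonempty
  ⟨v, hv.avoidableVertex⟩
end

section
/- For every positive integer k and every finite graph G and every vertex u ∈ V(G), either G − N[u] contains no induced path on k vertices, or there exists an induced path Q on k vertices with all vertices in G − N[u] that is avoidable in G. -/
/-!
Induction on the number of vertices outside `F ∪ {u}`, where `F` is a set of deleted vertices.
If `u` is isolated, the pivot moves to the last vertex of an extension of a path. Otherwise, for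
a neighbour `v` of `u`, contract the edge `uv`: an avoidable path of `G / uv` outside
`N[u] ∪ N[v]` is avoidable in `G`, since an induced cycle of `G / uv` through the merged vertex
lifts to an induced cycle of `G` through `u`, through `v`, or through both. If no contraction
yields such a path, every induced `P_k` outside `N[u]` meets `N[v]` for every neighbour `v` of
`u`, and an avoidable path of `G - N[u]` is avoidable in `G`: an extension with both ends
adjacent to `u` closes into an induced cycle through `u`; one with exactly one end `x` adjacent
to `u` contains an induced `P_k` outside `N[u] ∪ N[x]`; and one with no end adjacent to `u` lies
in `G - N[u]`.
-/

variable {V : Type*}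

lemma Nat.add_one_mod_eq_iff_s7 {n a b : ℕ} (ha : a < n) (hb : b < n) :
    (a + 1) % n = b ↔ a + 1 = b ∨ a + 1 = n ∧ b = 0 := by
  rcases eq_or_ne (a + 1) n with h | h
  · rw [h, Nat.mod_self]; omega
  · rw [Nat.mod_eq_of_lt (by omega)]; omega

lemma Fin.iff_of_imp_val_eq_zero_or_last {n : ℕ} {P : Fin (n + 1) → Prop}
    (h : ∀ i, P i → i.val = 0 ∨ i.val = n) (i : Fin (n + 1)) :
    P i ↔ i.val = 0 ∧ P 0 ∨ i.val = n ∧ P (Fin.last n) := by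
  constructor
  · intro hi
    rcases h i hi with h0 | h1
    · obtain rfl : i = 0 := Fin.ext h0
      exact Or.inl ⟨rfl, hi⟩
    · obtain rfl : i = Fin.last n := Fin.ext h1
      exact Or.inr ⟨rfl, hi⟩
  · rintro (⟨h0, hi⟩ | ⟨h1, hi⟩)
    · rwa [show i = 0 from Fin.ext h0]
    · rwa [show i = Fin.last n from Fin.ext h1]

section Paths

variable {G : SimpleGraph V} {m k : ℕ}

namespace IsInducedPathOn

lemma of_adj_iff {G' : SimpleGraph V} {q : Fin m → V} (hq : IsInducedPathOn G m q)
    (h : ∀ i j, G'.Adj (q i) (q j) ↔ G.Adj (q i) (q j)) : IsInducedPathOn G' m q :=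
  ⟨hq.1, fun i j => (h i j).trans (hq.2 i j)⟩

lemma window {q : Fin m → V} (hq : IsInducedPathOn G m q) (a : ℕ) (h : a + k ≤ m) :
    IsInducedPathOn G k (fun i : Fin k => q ⟨a + i, by omega⟩) := by
  refine ⟨fun i j hij => Fin.ext ?_, fun i j => ?_⟩
  · have := Fin.mk.inj_iff.1 (hq.1 hij)
    omega
  · rw [hq.2]
    dsimp only
    omega

lemma outsideClosedNbhd {q : Fin m → V} (hq : IsInducedPathOn G m q) {s t : Fin m}
    (h : s.val + 2 ≤ t.val ∨ t.val + 2 ≤ s.val) : OutsideClosedNbhd G (q s) (q t) := by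
  refine ⟨fun e => ?_, fun hst => ?_⟩
  · have := congrArg Fin.val (hq.1 e)
    omega
  · rw [hq.2] at hst
    omega

lemma exists_adj {q : Fin (m + 2) → V} (hq : IsInducedPathOn G (m + 2) q) (s : Fin (m + 2)) :
    ∃ t, G.Adj (q s) (q t) := by
  by_cases hs : s.val = m + 1
  · exact ⟨⟨m, by omega⟩, by rw [hq.2]; dsimp only; omega⟩
  · exact ⟨⟨s + 1, by omega⟩, by rw [hq.2]; simp⟩

lemma cons {q : Fin m → V} (hq : IsInducedPathOn G m q) {w : V} (hw : w ∉ Set.range q)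
    (hadj : ∀ i, G.Adj w (q i) ↔ i.val = 0) :
    IsInducedPathOn G (m + 1) (Fin.cons w q : Fin (m + 1) → V) := by
  refine ⟨Fin.cons_injective_iff.2 ⟨hw, hq.1⟩, fun i j => ?_⟩
  induction i using Fin.cases <;> induction j using Fin.cases <;>
    simp only [Fin.cons_zero, Fin.cons_succ, Fin.val_zero, Fin.val_succ, G.irrefl, hadj,
      G.adj_comm _ w, hq.2, false_iff] <;> omega

lemma isInducedCycleOn_snoc {q : Fin (m + 2) → V} (hq : IsInducedPathOn G (m + 2) q) {w : V}
    (hw : w ∉ Set.range q)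
    (hadj : ∀ i, G.Adj w (q i) ↔ i.val = 0 ∨ i.val = m + 1) :
    IsInducedCycleOn G (m + 3) (Fin.snoc q w : Fin (m + 3) → V) := by
  refine ⟨by omega, Fin.snoc_injective_of_injective hq.1 hw, fun i j => ?_⟩
  rw [Nat.add_one_mod_eq_iff_s7 i.isLt j.isLt, Nat.add_one_mod_eq_iff_s7 j.isLt i.isLt]
  induction i using Fin.lastCases <;> induction j using Fin.lastCases <;>
    simp only [Fin.snoc_last, Fin.snoc_castSucc, Fin.val_last, Fin.val_castSucc, G.irrefl, hadj,
      G.adj_comm _ w, hq.2, false_iff, true_and] <;> omega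

lemma isInducedCycleOn_snoc_cons {R : Fin (m + 2) → V} (hR : IsInducedPathOn G (m + 2) R)
    {a b : V} (hab : G.Adj a b)
    (ha : a ∉ Set.range R) (hb : b ∉ Set.range R) (hRa : ∀ i, G.Adj a (R i) ↔ i.val = 0)
    (hRb : ∀ i, G.Adj b (R i) ↔ i.val = m + 1) :
    IsInducedCycleOn G (m + 4)
      (Fin.snoc (Fin.cons a R : Fin (m + 3) → V) b : Fin (m + 4) → V) := by
  refine (hR.cons ha hRa).isInducedCycleOn_snoc ?_ fun i => ?_
  · rw [Fin.range_cons]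
    rintro (h | h)
    · exact hab.ne (Set.mem_singleton_iff.1 h).symm
    · exact hb h
  · induction i using Fin.cases <;> simp [hab.symm, hRb]

end IsInducedPathOn

namespace IsInducedCycleOn

variable {n : ℕ}

lemma of_adj_iff {G' : SimpleGraph V} {c : Fin n → V} (hc : IsInducedCycleOn G n c)
    (h : ∀ i j, G'.Adj (c i) (c j) ↔ G.Adj (c i) (c j)) : IsInducedCycleOn G' n c :=
  ⟨hc.1, hc.2.1, fun i j => (h i j).trans (hc.2.2 i j)⟩

lemma exists_adj {c : Fin n → V} (hc : IsInducedCycleOn G n c) (t : Fin n) :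
    ∃ s, G.Adj (c t) (c s) :=
  ⟨⟨(t.val + 1) % n, Nat.mod_lt _ t.pos⟩, (hc.2.2 _ _).2 (Or.inl rfl)⟩

lemma rotate {c : Fin n → V} (hc : IsInducedCycleOn G n c) (t : Fin n) :
    IsInducedCycleOn G n (fun i => c (i + t)) := by
  obtain ⟨m, rfl⟩ : ∃ m, n = m + 3 := ⟨n - 3, by have := hc.1; omega⟩
  have hsucc (a b : Fin (m + 3)) : (a.val + 1) % (m + 3) = b.val ↔ a + 1 = b := by
    rw [Fin.ext_iff, Fin.val_add, Fin.val_one]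
  refine ⟨hc.1, fun i j hij => add_right_cancel (hc.2.1 hij), fun i j => ?_⟩
  simp only [hc.2.2, hsucc, add_right_comm _ t 1, add_left_inj]

lemma init {c : Fin (m + 3) → V} (hc : IsInducedCycleOn G (m + 3) c) :
    IsInducedPathOn G (m + 2) (Fin.init c) := by
  refine ⟨hc.2.1.comp (Fin.castSucc_injective _), fun i j => ?_⟩
  rw [Fin.init, Fin.init, hc.2.2, Nat.add_one_mod_eq_iff_s7 i.castSucc.isLt j.castSucc.isLt,
    Nat.add_one_mod_eq_iff_s7 j.castSucc.isLt i.castSucc.isLt]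
  simp only [Fin.val_castSucc]
  omega

lemma adj_last_iff {c : Fin (m + 3) → V} (hc : IsInducedCycleOn G (m + 3) c) (i : Fin (m + 2)) :
    G.Adj (c (Fin.last _)) (Fin.init c i) ↔ i.val = 0 ∨ i.val = m + 1 := by
  rw [Fin.init, hc.2.2, Nat.add_one_mod_eq_iff_s7 (Fin.last _).isLt i.castSucc.isLt,
    Nat.add_one_mod_eq_iff_s7 i.castSucc.isLt (Fin.last _).isLt]
  simp only [Fin.val_castSucc, Fin.val_last, true_and]
  omega

end IsInducedCycleOn

end Paths

section Merge

variable {G : SimpleGraph V} {u v : V}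

lemma mergeGraph_adj_of_ne {a b : V} (hau : a ≠ u) (hav : a ≠ v) (hbu : b ≠ u)
    (hbv : b ≠ v) : (mergeGraph G u v).Adj a b ↔ G.Adj a b :=
  ⟨fun ⟨_, _, _, h⟩ => by simpa [hau, hbu] using h, fun h => ⟨h.ne, hav, hbv, Or.inl h⟩⟩

lemma mergeGraph_adj_left (huv : u ≠ v) {b : V} (hbu : b ≠ u) (hbv : b ≠ v) :
    (mergeGraph G u v).Adj u b ↔ G.Adj u b ∨ G.Adj v b :=
  ⟨fun ⟨_, _, _, h⟩ => by simpa [hbu] using h,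
    fun h => ⟨hbu.symm, huv, hbv, h.elim Or.inl fun h => Or.inr (Or.inl ⟨rfl, h⟩)⟩⟩

lemma exists_isInducedCycleOn_of_adj_ends {m : ℕ} {R : Fin (m + 2) → V}
    (hR : IsInducedPathOn G (m + 2) R) (huv : G.Adj u v)
    (hu : u ∉ Set.range R) (hv : v ∉ Set.range R)
    (hends : ∀ i, G.Adj u (R i) ∨ G.Adj v (R i) ↔ i.val = 0 ∨ i.val = m + 1) :
    ∃ n c, IsInducedCycleOn G n c ∧ Set.range R ⊆ Set.range c := by
  have hu' := Fin.iff_of_imp_val_eq_zero_or_last (P := fun i => G.Adj u (R i))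
    fun i h => (hends i).1 (Or.inl h)
  have hv' := Fin.iff_of_imp_val_eq_zero_or_last (P := fun i => G.Adj v (R i))
    fun i h => (hends i).1 (Or.inr h)
  have hsnoc {n : ℕ} (R' : Fin n → V) (w : V) :
      Set.range R' ⊆ Set.range (Fin.snoc R' w : Fin (n + 1) → V) := by
    rw [Fin.range_snoc]; exact Set.subset_insert _ _
  have hcons (w : V) : Set.range R ⊆ Set.range (Fin.cons w R : Fin (m + 3) → V) := by
    rw [Fin.range_cons]; exact Set.subset_union_right
  by_cases hu2 : G.Adj u (R 0) ∧ G.Adj u (R (Fin.last _))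
  · exact ⟨_, _, hR.isInducedCycleOn_snoc hu fun i => by simp [hu' i, hu2], hsnoc R u⟩
  by_cases hv2 : G.Adj v (R 0) ∧ G.Adj v (R (Fin.last _))
  · exact ⟨_, _, hR.isInducedCycleOn_snoc hv fun i => by simp [hv' i, hv2], hsnoc R v⟩
  have hlast := (hends (Fin.last _)).2 (Or.inr rfl)
  have hfirst := (hends 0).2 (Or.inl rfl)
  by_cases hu0 : G.Adj u (R 0)
  · have hu1 : ¬ G.Adj u (R (Fin.last _)) := fun h => hu2 ⟨hu0, h⟩
    have hv1 : G.Adj v (R (Fin.last _)) := hlast.resolve_left hu1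
    have hv0 : ¬ G.Adj v (R 0) := fun h => hv2 ⟨h, hv1⟩
    refine ⟨_, _, hR.isInducedCycleOn_snoc_cons huv hu hv (fun i => ?_) (fun i => ?_),
      (hcons u).trans (hsnoc _ v)⟩
    · simp only [hu' i, hu0, hu1, and_true, and_false, or_false]
    · simp only [hv' i, hv0, hv1, and_true, and_false, false_or]
  · have hv0 : G.Adj v (R 0) := hfirst.resolve_left hu0
    have hv1 : ¬ G.Adj v (R (Fin.last _)) := fun h => hv2 ⟨hv0, h⟩
    have hu1 : G.Adj u (R (Fin.last _)) := hlast.resolve_right hv1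
    refine ⟨_, _, hR.isInducedCycleOn_snoc_cons huv.symm hv hu (fun i => ?_) (fun i => ?_),
      (hcons v).trans (hsnoc _ u)⟩
    · simp only [hv' i, hv0, hv1, and_true, and_false, or_false]
    · simp only [hu' i, hu0, hu1, and_true, and_false, false_or]

lemma isIsolated_mergeGraph_right : (mergeGraph G u v).IsIsolated v :=
  fun _ h => h.2.1 rfl

lemma isIsolated_mergeGraph {f : V} (hf : G.IsIsolated f) (hfu : f ≠ u) :
    (mergeGraph G u v).IsIsolated f := by
  rintro w ⟨-, -, -, h | ⟨h, -⟩ | ⟨-, h⟩⟩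
  exacts [hf w h, hfu h, hf v h]

lemma exists_isInducedCycleOn_of_mergeGraph (huv : G.Adj u v) {n : ℕ} {c : Fin n → V}
    (hc : IsInducedCycleOn (mergeGraph G u v) n c) :
    ∃ n' c', IsInducedCycleOn G n' c' ∧ ∀ s, c s ≠ u → c s ∈ Set.range c' := by
  obtain ⟨m, rfl⟩ : ∃ m, n = m + 3 := ⟨n - 3, by have := hc.1; omega⟩
  have hcv (s) : c s ≠ v := fun h => by
    obtain ⟨t, ht⟩ := hc.exists_adj s
    exact isIsolated_mergeGraph_right _ (h ▸ ht)
  obtain ⟨t, ht⟩ | hcu := em (∃ t, c t = u)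
  swap
  · have hcu (s) : c s ≠ u := fun h => hcu ⟨s, h⟩
    exact ⟨_, c, hc.of_adj_iff fun i j =>
      (mergeGraph_adj_of_ne (hcu i) (hcv i) (hcu j) (hcv j)).symm, fun s _ => ⟨s, rfl⟩⟩
  -- rotate the cycle so that `u` comes last; the rest is then an induced path of `G`
  set r := t - Fin.last (m + 2)
  have hc₀ := hc.rotate r
  set c₀ : Fin (m + 3) → V := fun i => c (i + r)
  have hlast : c₀ (Fin.last _) = u := by simp [c₀, r, ht]
  have hRu (i) : Fin.init c₀ i ≠ u := fun h =>
    (Fin.castSucc_lt_last i).ne (hc₀.2.1 (h.trans hlast.symm))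
  have hRv (i) : Fin.init c₀ i ≠ v := hcv _
  obtain ⟨n', c', hc', hsub⟩ := exists_isInducedCycleOn_of_adj_ends
    (hc₀.init.of_adj_iff fun i j => (mergeGraph_adj_of_ne (hRu i) (hRv i) (hRu j) (hRv j)).symm)
    huv (fun ⟨i, hi⟩ => hRu i hi) (fun ⟨i, hi⟩ => hRv i hi)
    (fun i => by
      rw [← mergeGraph_adj_left huv.ne (hRu i) (hRv i), ← hc₀.adj_last_iff i, hlast])
  refine ⟨n', c', hc', fun s hs => hsub ?_⟩
  have hs₀ : c s = c₀ (s - r) := by simp [c₀]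
  rcases Fin.eq_castSucc_or_eq_last (s - r) with ⟨i, hi⟩ | hi
  · exact ⟨i, by rw [hs₀, hi]; rfl⟩
  · exact absurd (by rw [hs₀, hi, hlast]) hs

end Merge

section Extension

variable {G : SimpleGraph V} {k : ℕ} {p : Fin k → V} {q : Fin (k + 2) → V}

lemma IsExtension.mem_range (hq : IsExtension G p q) {s : Fin (k + 2)} (h0 : s.val ≠ 0)
    (h1 : s.val ≠ k + 1) : q s ∈ Set.range p :=
  ⟨⟨s.val - 1, by omega⟩, by rw [← hq.2]; congr; ext; simp; omega⟩

lemma IsExtension.ne_of_forall_outsideClosedNbhd (hq : IsExtension G p q) (hk : 1 ≤ k) {w : V}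
    (hp : ∀ i, OutsideClosedNbhd G w (p i)) (s : Fin (k + 2)) : q s ≠ w := by
  have hadj (i : Fin k) (t : Fin (k + 2)) (ht : t = i.succ.castSucc) (h : G.Adj (q s) (q t)) :
      q s ≠ w := fun hs => (hp i).2 (by rw [← hs, ← hq.2 i, ← ht]; exact h)
  by_cases h0 : s.val = 0
  · exact hadj ⟨0, hk⟩ ⟨1, by omega⟩ rfl (by rw [hq.1.2]; dsimp only; omega)
  by_cases h1 : s.val = k + 1
  · exact hadj ⟨k - 1, by omega⟩ ⟨k, by omega⟩ (Fin.ext (by simp; omega))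
      (by rw [hq.1.2]; dsimp only; omega)
  obtain ⟨i, hi⟩ := hq.mem_range h0 h1
  exact hi ▸ (hp i).1

lemma IsExtension.mem_of_ends {S : Set V} (hq : IsExtension G p q) (hp : ∀ i, p i ∈ S)
    {s : Fin (k + 2)} (h0 : s.val = 0 → q 0 ∈ S) (h1 : s.val = k + 1 → q (Fin.last _) ∈ S) :
    q s ∈ S := by
  by_cases hs0 : s.val = 0
  · rw [show s = 0 from Fin.ext hs0]
    exact h0 hs0
  by_cases hs1 : s.val = k + 1
  · rw [show s = Fin.last _ from Fin.ext hs1]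
    exact h1 hs1
  obtain ⟨i, hi⟩ := hq.mem_range hs0 hs1
  exact hi ▸ hp i

lemma IsExtension.inInducedCycle_of_adj_ends (hq : IsExtension G p q) (hk : 1 ≤ k) {u : V}
    (hp : ∀ i, OutsideClosedNbhd G u (p i)) (h0 : G.Adj u (q 0))
    (h1 : G.Adj u (q (Fin.last _))) : InInducedCycle G q := by
  refine ⟨_, _, hq.1.isInducedCycleOn_snoc
    (fun ⟨s, hs⟩ => hq.ne_of_forall_outsideClosedNbhd hk hp s hs) fun s => ?_, ?_⟩
  · by_cases hs0 : s.val = 0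
    · simp [show s = 0 from Fin.ext hs0, h0]
    by_cases hs1 : s.val = k + 1
    · simp [show s = Fin.last _ from Fin.ext hs1, h1]
    obtain ⟨i, hi⟩ := hq.mem_range hs0 hs1
    exact iff_of_false (hi ▸ (hp i).2) (by omega)
  · rw [Fin.range_snoc]
    exact Set.subset_insert _ _

end Extension

def IsPathOutside (G : SimpleGraph V) (u : V) (F : Set V) {k : ℕ} (p : Fin k → V) : Prop :=
  IsInducedPathOn G k p ∧ ∀ i, OutsideClosedNbhd G u (p i) ∧ p i ∉ F

/-- `HR G k u` in the graph `G - F`. Vertices cannot be deleted from the type `V`, so deleted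
vertices are kept, isolated, in `F`, and paths must avoid them. -/
def HRWithout (G : SimpleGraph V) (k : ℕ) (u : V) (F : Set V) : Prop :=
  (∀ p : Fin k → V, ¬ IsPathOutside G u F p) ∨
    ∃ p : Fin k → V, IsPathOutside G u F p ∧ IsAvoidable G p

section Lifting

variable {G : SimpleGraph V} {k : ℕ} {u v : V} {F : Set V}

lemma isPathOutside_mergeGraph_iff (huv : G.Adj u v) {p : Fin k → V} :
    IsPathOutside (mergeGraph G u v) u (insert v F) p ↔
      IsPathOutside G u F p ∧ ∀ i, OutsideClosedNbhd G v (p i) := by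
  constructor
  · rintro ⟨hp, hout⟩
    have hpv (i) : p i ≠ v := fun h => (hout i).2 (h ▸ Set.mem_insert _ _)
    have hadj (i) : ¬ G.Adj u (p i) ∧ ¬ G.Adj v (p i) :=
      not_or.1 ((mergeGraph_adj_left huv.ne (hout i).1.1 (hpv i)).not.1 (hout i).1.2)
    refine ⟨⟨hp.of_adj_iff fun i j => (mergeGraph_adj_of_ne (hout i).1.1 (hpv i)
      (hout j).1.1 (hpv j)).symm, fun i => ⟨⟨(hout i).1.1, (hadj i).1⟩,
        fun h => (hout i).2 (Set.mem_insert_of_mem _ h)⟩⟩, fun i => ⟨hpv i, (hadj i).2⟩⟩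
  · rintro ⟨⟨hp, hout⟩, hv⟩
    refine ⟨hp.of_adj_iff fun i j => mergeGraph_adj_of_ne (hout i).1.1 (hv i).1
      (hout j).1.1 (hv j).1, fun i => ⟨⟨(hout i).1.1, ?_⟩, ?_⟩⟩
    · rw [mergeGraph_adj_left huv.ne (hout i).1.1 (hv i).1]
      exact not_or.2 ⟨(hout i).1.2, (hv i).2⟩
    · rintro (h | h)
      exacts [(hv i).1 h, (hout i).2 h]

lemma IsAvoidable.of_mergeGraph (hk : 1 ≤ k) (huv : G.Adj u v) {p : Fin k → V}
    (hpu : ∀ i, OutsideClosedNbhd G u (p i)) (hpv : ∀ i, OutsideClosedNbhd G v (p i))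
    (hav : IsAvoidable (mergeGraph G u v) p) : IsAvoidable G p := by
  have hadj {q : Fin (k + 2) → V} (hq : IsExtension G p q) (s t) :
      (mergeGraph G u v).Adj (q s) (q t) ↔ G.Adj (q s) (q t) :=
    mergeGraph_adj_of_ne (hq.ne_of_forall_outsideClosedNbhd hk hpu s)
      (hq.ne_of_forall_outsideClosedNbhd hk hpv s) (hq.ne_of_forall_outsideClosedNbhd hk hpu t)
      (hq.ne_of_forall_outsideClosedNbhd hk hpv t)
  refine ⟨hav.1.of_adj_iff fun i j => (mergeGraph_adj_of_ne (hpu i).1 (hpv i).1 (hpu j).1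
    (hpv j).1).symm, fun q hq => ?_⟩
  obtain ⟨n, c, hc, hqc⟩ := hav.2 q ⟨hq.1.of_adj_iff (hadj hq), hq.2⟩
  obtain ⟨n', c', hc', hcc'⟩ := exists_isInducedCycleOn_of_mergeGraph huv hc
  refine ⟨n', c', hc', ?_⟩
  rintro _ ⟨s, rfl⟩
  obtain ⟨t, ht⟩ := hqc ⟨s, rfl⟩
  rw [← ht]
  exact hcc' t (ht ▸ hq.ne_of_forall_outsideClosedNbhd hk hpu s)

lemma spanningCoe_induce_adj {S : Set V} {a b : V} :
    (G.induce S).spanningCoe.Adj a b ↔ G.Adj a b ∧ a ∈ S ∧ b ∈ S := by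
  simp [SimpleGraph.map_adj]

lemma isPathOutside_induce_outside_iff {p : Fin k → V} :
    IsPathOutside (G.induce {z | OutsideClosedNbhd G u z}).spanningCoe u
        (F ∪ {z | OutsideClosedNbhd G u z}ᶜ) p ↔ IsPathOutside G u F p := by
  constructor
  · rintro ⟨hp, hout⟩
    have hpS (i) : OutsideClosedNbhd G u (p i) := not_not.1 fun h => (hout i).2 (Or.inr h)
    exact ⟨hp.of_adj_iff fun i j => by simp [hpS i, hpS j],
      fun i => ⟨hpS i, fun h => (hout i).2 (Or.inl h)⟩⟩
  · rintro ⟨hp, hout⟩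
    refine ⟨hp.of_adj_iff fun i j => by simp [(hout i).1, (hout j).1],
      fun i => ⟨⟨(hout i).1.1, fun h => (hout i).1.2 (spanningCoe_induce_adj.1 h).1⟩, ?_⟩⟩
    rintro (h | h)
    exacts [(hout i).2 h, h (hout i).1]

lemma IsAvoidable.of_induce_outside (hk : 1 ≤ k) (hF : ∀ f ∈ F, G.IsIsolated f)
    (hno : ∀ v, G.Adj u v → ∀ p : Fin k → V, IsPathOutside G u F p →
      ∃ i, ¬ OutsideClosedNbhd G v (p i))
    {Q : Fin k → V} (hQ : ∀ i, OutsideClosedNbhd G u (Q i))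
    (hav : IsAvoidable (G.induce {z | OutsideClosedNbhd G u z}).spanningCoe Q) :
    IsAvoidable G Q := by
  set S := {z | OutsideClosedNbhd G u z}
  have hadjS {a b : V} (ha : a ∈ S) (hb : b ∈ S) :
      (G.induce S).spanningCoe.Adj a b ↔ G.Adj a b := by
    simp [ha, hb]
  refine ⟨hav.1.of_adj_iff fun i j => (hadjS (hQ i) (hQ j)).symm, fun q hq => ?_⟩
  have hqF (s) : q s ∉ F := fun hs => by
    obtain ⟨t, ht⟩ := hq.1.exists_adj s
    exact hF _ hs _ ht
  have hwindow (a : ℕ) (h : a + k ≤ k + 2) (e : Fin (k + 2)) (he : G.Adj u (q e))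
      (hfar : ∀ i : Fin k, e.val + 2 ≤ a + i ∨ a + i + 2 ≤ e.val)
      (hS : ∀ i : Fin k, q ⟨a + i, by omega⟩ ∈ S) : False := by
    obtain ⟨i, hi⟩ := hno _ he _ ⟨hq.1.window a h, fun i => ⟨hS i, hqF _⟩⟩
    exact hi (hq.1.outsideClosedNbhd (hfar i))
  have hend (s) : q s ∈ S ∨ G.Adj u (q s) :=
    (em (G.Adj u (q s))).symm.imp_left fun h => ⟨hq.ne_of_forall_outsideClosedNbhd hk hQ s, h⟩
  rcases hend 0 with h0 | h0 <;> rcases hend (Fin.last _) with h1 | h1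
  · have hqS (s) : q s ∈ S := hq.mem_of_ends hQ (fun _ => h0) (fun _ => h1)
    obtain ⟨n, c, hc, hqc⟩ :=
      hav.2 q ⟨hq.1.of_adj_iff fun s t => hadjS (hqS s) (hqS t), hq.2⟩
    have hcS (t) : c t ∈ S := by
      obtain ⟨s, hs⟩ := hc.exists_adj t
      exact (spanningCoe_induce_adj.1 hs).2.1
    exact ⟨n, c, hc.of_adj_iff fun i j => (hadjS (hcS i) (hcS j)).symm, hqc⟩
  · exact (hwindow 0 (by omega) (Fin.last _) h1 (fun i => by simp)
      fun i => hq.mem_of_ends hQ (fun _ => h0) fun h => by dsimp only at h; omega).elim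
  · exact (hwindow 2 (by omega) 0 h0 (fun i => by simp)
      fun i => hq.mem_of_ends hQ (fun h => by dsimp only at h; omega) fun _ => h1).elim
  · exact hq.inInducedCycle_of_adj_ends hk hQ h0 h1

end Lifting

section Induction

variable {G : SimpleGraph V} {k : ℕ} {u : V} {F : Set V}

lemma HRWithout.of_isIsolated (hF : ∀ f ∈ F, G.IsIsolated f) (hu : G.IsIsolated u)
    (ih : ∀ y, ¬ G.IsIsolated y → HRWithout G k y (insert u F)) : HRWithout G k u F := by
  have houtside {y : V} {Q : Fin k → V} (hQ : IsPathOutside G y (insert u F) Q) :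
      IsPathOutside G u F Q :=
    ⟨hQ.1, fun i => ⟨⟨fun h => (hQ.2 i).2 (Or.inl h), hu _⟩,
      fun h => (hQ.2 i).2 (Or.inr h)⟩⟩
  by_cases hex : ∃ y, ¬ G.IsIsolated y ∧ ∃ Q : Fin k → V,
      IsPathOutside G y (insert u F) Q ∧ IsAvoidable G Q
  · obtain ⟨y, -, Q, hQ, hav⟩ := hex
    exact Or.inr ⟨Q, houtside hQ, hav⟩
  refine (em (∃ P : Fin k → V, IsPathOutside G u F P)).symm.imp not_exists.1 fun ⟨P, hP⟩ =>
    ⟨P, hP, hP.1, fun q hq => ?_⟩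
  exfalso
  have hnotIsolated (s) : ¬ G.IsIsolated (q s) := fun h => by
    obtain ⟨t, ht⟩ := hq.1.exists_adj s
    exact h _ ht
  rcases ih _ (hnotIsolated (Fin.last _)) with hno | hyes
  · refine hno _ ⟨hq.1.window 0 (by omega), fun i => ⟨hq.1.outsideClosedNbhd ?_, ?_⟩⟩
    · simp only [Fin.val_last]
      omega
    · rintro (h | h)
      exacts [hnotIsolated _ (h ▸ hu), hnotIsolated _ (hF _ h)]
  · exact hex ⟨_, hnotIsolated _, hyes⟩

lemma HRWithout.of_mergeGraph_of_induce (hk : 1 ≤ k) (hF : ∀ f ∈ F, G.IsIsolated f)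
    (ihMerge : ∀ v, G.Adj u v → HRWithout (mergeGraph G u v) k u (insert v F))
    (ihInduce : HRWithout (G.induce {z | OutsideClosedNbhd G u z}).spanningCoe k u
      (F ∪ {z | OutsideClosedNbhd G u z}ᶜ)) :
    HRWithout G k u F := by
  by_cases hlift : ∃ v, G.Adj u v ∧ ∃ Q : Fin k → V,
      IsPathOutside (mergeGraph G u v) u (insert v F) Q ∧ IsAvoidable (mergeGraph G u v) Q
  · obtain ⟨v, huv, Q, hQ, hav⟩ := hlift
    obtain ⟨hQ, hQv⟩ := (isPathOutside_mergeGraph_iff huv).1 hQ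
    exact Or.inr ⟨Q, hQ, hav.of_mergeGraph hk huv (fun i => (hQ.2 i).1) hQv⟩
  have hno (v) (huv : G.Adj u v) (p : Fin k → V) (hp : IsPathOutside G u F p) :
      ∃ i, ¬ OutsideClosedNbhd G v (p i) := by
    by_contra! hpv
    rcases ihMerge v huv with hno | hyes
    · exact hno p ((isPathOutside_mergeGraph_iff huv).2 ⟨hp, hpv⟩)
    · exact hlift ⟨v, huv, hyes⟩
  rcases ihInduce with hnone | ⟨Q, hQ, hav⟩
  · exact Or.inl fun p hp => hnone p (isPathOutside_induce_outside_iff.2 hp)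
  · have hQ := isPathOutside_induce_outside_iff.1 hQ
    exact Or.inr ⟨Q, hQ, hav.of_induce_outside hk hF hno fun i => (hQ.2 i).1⟩

end Induction

theorem HRWithout.of_forall_isIsolated [Finite V] {k : ℕ} (hk : 1 ≤ k) (G : SimpleGraph V)
    (u : V) (F : Set V) (hF : ∀ f ∈ F, G.IsIsolated f) : HRWithout G k u F := by
  induction hn : (insert u F)ᶜ.ncard using Nat.strong_induction_on generalizing G u F with
  | _ n ih =>
  have ih' (G' : SimpleGraph V) (u' : V) (F' : Set V) (hF' : ∀ f ∈ F', G'.IsIsolated f)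
      (hlt : insert u F ⊂ insert u' F') : HRWithout G' k u' F' :=
    ih _ (hn ▸ Set.ncard_lt_ncard (compl_lt_compl_iff_lt.2 hlt) (Set.toFinite _)) G' u' F' hF' rfl
  by_cases hu : G.IsIsolated u
  · refine HRWithout.of_isIsolated hF hu fun y hy => ih' G y _ ?_ ?_
    · rintro f (rfl | hf)
      exacts [hu, hF f hf]
    · exact Set.ssubset_insert fun h => hy (h.elim (· ▸ hu) (hF y))
  · obtain ⟨w, huw⟩ := not_forall_not.1 hu
    have hw : w ∉ insert u F := fun h => h.elim (fun h => huw.ne h.symm) (hF w · u huw.symm)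
    refine HRWithout.of_mergeGraph_of_induce hk hF (fun v huv => ih' _ u _ ?_ ?_) (ih' _ u _ ?_ ?_)
    · rintro f (rfl | hf)
      exacts [isIsolated_mergeGraph_right,
        isIsolated_mergeGraph (hF f hf) fun h => hu (h ▸ hF f hf)]
    · have hv : v ∉ insert u F := fun h => h.elim (huv.ne ·.symm) (hF v · u huv.symm)
      rw [Set.insert_comm]
      exact Set.ssubset_insert hv
    · intro f hf w h
      rw [spanningCoe_induce_adj] at h
      exact hf.elim (hF f · w h.1) (· h.2.1)
    · exact (Set.ssubset_iff_of_subset (Set.insert_subset_insert Set.subset_union_left)).2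
        ⟨w, Or.inr (Or.inr fun h => h.2 huw), hw⟩

/-- For every positive `k`, finite graph `G` and vertex `u`, either `G − N[u]` has no
induced `P_k`, or some induced `P_k` inside `G − N[u]` is avoidable in `G`. -/
theorem stmt7 [Fintype V] (k : ℕ) (hk : 1 ≤ k) (G : SimpleGraph V) (u : V) :
    (¬ ∃ p : Fin k → V, IsInducedPathOn G k p ∧ ∀ i, OutsideClosedNbhd G u (p i)) ∨
    (∃ p : Fin k → V, IsInducedPathOn G k p ∧ (∀ i, OutsideClosedNbhd G u (p i)) ∧
      IsAvoidable G p) := by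
  rcases HRWithout.of_forall_isIsolated hk G u ∅ (by simp) with hnone | ⟨p, hp, hav⟩
  · exact Or.inl fun ⟨p, hp, hout⟩ =>
      hnone p ⟨hp, fun i => ⟨hout i, Set.notMem_empty _⟩⟩
  · exact Or.inr ⟨p, hp.1, fun i => (hp.2 i).1, hav⟩
end

section
/- Let k be a positive integer and G a finite graph, and suppose for every vertex u of G either G − N[u] has no induced P_k or there is an induced P_k in G − N[u] avoidable in G; suppose moreover G contains an induced P_k but no avoidable induced P_k. Then every induced path on k vertices in G dominates V(G). -/
variable {V : Type*}

theorem stmt11_general (k : ℕ) (G : SimpleGraph V)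
    (hHR : ∀ u : V,
      (¬ ∃ p : Fin k → V, IsInducedPathOn G k p ∧ ∀ i, OutsideClosedNbhd G u (p i)) ∨
      (∃ p : Fin k → V, IsInducedPathOn G k p ∧ (∀ i, OutsideClosedNbhd G u (p i)) ∧
        IsAvoidable G p))
    (hNoAvoid : ¬ ∃ p : Fin k → V, IsAvoidable G p) :
    ∀ p : Fin k → V, IsInducedPathOn G k p →
      ∀ v : V, (∃ i, p i = v) ∨ (∃ i, G.Adj (p i) v) := by
  intro p hp v
  by_contra hv
  simp only [not_or, not_exists] at hv
  have hpOutside : ∀ i, OutsideClosedNbhd G v (p i) := fun i => ⟨hv.1 i, fun h => hv.2 i h.symm⟩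
  rcases hHR v with hNone | ⟨q, -, -, hq⟩
  · exact hNone ⟨p, hp, hpOutside⟩
  · exact hNoAvoid ⟨q, hq⟩

/-- If `H_R(G,k,u)` holds for every vertex `u`, and `G` contains an induced `P_k` but no
avoidable induced `P_k`, then every induced `P_k` of `G` dominates `V(G)`. -/
theorem stmt11 [Fintype V] (k : ℕ) (hk : 1 ≤ k) (G : SimpleGraph V)
    (hHR : ∀ u : V,
      (¬ ∃ p : Fin k → V, IsInducedPathOn G k p ∧ ∀ i, OutsideClosedNbhd G u (p i)) ∨
      (∃ p : Fin k → V, IsInducedPathOn G k p ∧ (∀ i, OutsideClosedNbhd G u (p i)) ∧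
        IsAvoidable G p))
    (hPk : ∃ p : Fin k → V, IsInducedPathOn G k p)
    (hNoAvoid : ¬ ∃ p : Fin k → V, IsAvoidable G p) :
    ∀ p : Fin k → V, IsInducedPathOn G k p →
      ∀ v : V, (∃ i, p i = v) ∨ (∃ i, G.Adj (p i) v) :=
  stmt11_general k G hHR hNoAvoid
end

section
/- For every positive integer k ≥ 1, if a finite graph G contains an induced path on k vertices, then G contains an induced path on k vertices that is avoidable in G; consequently, the problem of deciding whether G contains an induced path on k vertices is equivalent to deciding whether G contains an avoidable induced path on k vertices. -/
variable {V : Type*}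

/-!
An extension `x–p–y` lies on an induced cycle as soon as `x` and `y` are joined by a walk whose
other vertices avoid the closed neighbourhood of `p`: a shortest such walk is an induced path, and
glued to `x–p–y` it closes up an induced cycle.

Such a `p` is found in a stronger form, by induction on `|V \ F|`: if `F` consists of isolated
vertices, `w ∉ F`, and some induced `P_k` avoids `N[w] ∪ F`, then some such `P_k` has all its
extensions reconnected in this sense. If a neighbour `u` of `w` misses some admissible `P_k`,
contract the edge `wu` (`u` becomes isolated and joins `F`); a reconnecting walk of the contracted
graph lifts to `G` through `u`. Otherwise recurse into `G - (N[w] ∪ F)`. An extension of the path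
found there has either both ends inside that subgraph, where it is reconnected, or both ends
adjacent to `w`, which then reconnects them: an end adjacent to `w` sees every admissible `P_k`,
so it cannot be the only such end, as it misses the `P_k` left after deleting it and its neighbour.
-/

theorem Nat.add_one_mod_eq_iff_s18 {n i j : ℕ} (hi : i < n) (hj : j < n) :
    (i + 1) % n = j ↔ i + 1 = j ∨ (i + 1 = n ∧ j = 0) := by
  rcases Nat.lt_or_ge (i + 1) n with h | h
  · rw [Nat.mod_eq_of_lt h]; omega
  · rw [show i + 1 = n by omega, Nat.mod_self]; omega

namespace SimpleGraph.Walk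

variable {G : SimpleGraph V} {u v : V}

theorem dist_getVert_of_length_eq_dist {W : G.Walk u v} (hW : W.length = G.dist u v) {i j : ℕ}
    (hij : i ≤ j) (hj : j ≤ W.length) : G.dist (W.getVert i) (W.getVert j) = j - i := by
  have hsub := G.dist_le ((W.drop i).take (j - i))
  have hreach := ((W.drop i).take (j - i)).reachable
  rw [take_length, drop_length, drop_getVert, Nat.add_sub_cancel' hij] at hsub
  rw [drop_getVert, Nat.add_sub_cancel' hij] at hreach
  obtain ⟨S, hS⟩ := hreach.exists_walk_length_eq_dist
  have hsup := G.dist_le (((W.take i).append S).append (W.drop j))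
  simp only [length_append, take_length, drop_length] at hsup
  omega

theorem isInducedPathOn_getVert_of_length_eq_dist {W : G.Walk u v}
    (hW : W.length = G.dist u v) :
    IsInducedPathOn G (W.length + 1) (fun i => W.getVert i) := by
  have key : ∀ i j : Fin (W.length + 1), i ≤ j →
      (W.getVert i = W.getVert j → i = j) ∧
      (G.Adj (W.getVert i) (W.getVert j) ↔ (i.val + 1 = j.val ∨ j.val + 1 = i.val)) := by
    intro i j hij
    have hd := dist_getVert_of_length_eq_dist hW hij (by omega)
    refine ⟨fun h => ?_, by rw [← dist_eq_one_iff_adj, hd]; omega⟩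
    rw [h, dist_self] at hd
    exact Fin.ext (by omega)
  refine ⟨fun i j h => ?_, fun i j => ?_⟩ <;> rcases le_total i j with hij | hij
  · exact (key i j hij).1 h
  · exact ((key j i hij).1 h.symm).symm
  · exact (key i j hij).2
  · rw [G.adj_comm, (key j i hij).2, or_comm]

end SimpleGraph.Walk

section

variable {G : SimpleGraph V}

theorem IsInducedPathOn.comp_embedding_iff {W : Type*} {G' : SimpleGraph W}
    (f : G ↪g G') {m : ℕ} {p : Fin m → V} :
    IsInducedPathOn G' m (f ∘ p) ↔ IsInducedPathOn G m p := by
  simp only [IsInducedPathOn, f.injective.of_comp_iff, Function.comp_apply, f.map_adj_iff]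

theorem IsInducedPathOn.congr {G' : SimpleGraph V} {m : ℕ} {p : Fin m → V}
    (hp : IsInducedPathOn G m p) (h : ∀ i j, G'.Adj (p i) (p j) ↔ G.Adj (p i) (p j)) :
    IsInducedPathOn G' m p :=
  ⟨hp.1, fun i j => (h i j).trans (hp.2 i j)⟩

theorem IsInducedPathOn.window_s18 {m k : ℕ} {p : Fin m → V} (hp : IsInducedPathOn G m p) (t : ℕ)
    (h : k + t ≤ m) : IsInducedPathOn G k (fun i : Fin k => p ⟨i + t, by omega⟩) := by
  refine ⟨fun a b hab => Fin.ext ?_, fun i j => ?_⟩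
  · have := congrArg Fin.val (hp.1 hab)
    simp only at this
    omega
  · rw [hp.2]
    simp only
    omega

theorem IsInducedPathOn.inInducedCycle_of_closingPath {a b : ℕ} (ha : 1 ≤ a) (hb : 2 ≤ b)
    {P : Fin (a + 1) → V} {Q : Fin (b + 1) → V} (hP : IsInducedPathOn G (a + 1) P)
    (hQ : IsInducedPathOn G (b + 1) Q) (hstart : Q 0 = P (Fin.last a))
    (hend : Q (Fin.last b) = P 0)
    (hsep : ∀ i j, 0 < i.val → i.val < a → 0 < j.val → j.val < b →
      P i ≠ Q j ∧ ¬ G.Adj (P i) (Q j)) :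
    InInducedCycle G P := by
  let c : Fin (a + b) → V := fun i =>
    if h : i.val ≤ a then P ⟨i, by omega⟩ else Q ⟨i - a, by omega⟩
  have hcP : ∀ i : Fin (a + b), (hi : i.val ≤ a) → c i = P ⟨i, by omega⟩ :=
    fun i hi => dif_pos hi
  have hcQ : ∀ i : Fin (a + b), a ≤ i.val → c i = Q ⟨i - a, by omega⟩ := by
    intro i hi
    rcases hi.lt_or_eq with hi | hi
    · exact dif_neg (by omega)
    · have h0 : (⟨i - a, by omega⟩ : Fin (b + 1)) = 0 := Fin.ext (show i.val - a = 0 by omega)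
      rw [hcP i hi.ge, h0, hstart]
      exact congrArg P (Fin.ext hi.symm)
  have key : ∀ i j : Fin (a + b), i ≤ j → (c i = c j → i = j) ∧
      (G.Adj (c i) (c j) ↔ ((i.val + 1) % (a + b) = j.val ∨ (j.val + 1) % (a + b) = i.val)) := by
    intro i j hij
    rw [Nat.add_one_mod_eq_iff_s18 i.isLt j.isLt, Nat.add_one_mod_eq_iff_s18 j.isLt i.isLt]
    have hij' : i.val ≤ j.val := hij
    by_cases hja : j.val ≤ a
    · rw [hcP i (by omega), hcP j hja, hP.1.eq_iff, hP.2]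
      simp only [Fin.ext_iff]
      omega
    by_cases hia : a ≤ i.val
    · rw [hcQ i hia, hcQ j (by omega), hQ.1.eq_iff, hQ.2]
      simp only [Fin.ext_iff]
      omega
    by_cases hi0 : i.val = 0
    · have : c i = Q (Fin.last b) := by rw [hcP i (by omega), hend]; congr 1; ext; simp [hi0]
      rw [this, hcQ j (by omega), hQ.1.eq_iff, hQ.2]
      simp only [Fin.ext_iff, Fin.val_last]
      omega
    · obtain ⟨hne, hnadj⟩ := hsep ⟨i, by omega⟩ ⟨j - a, by omega⟩ (show 0 < i.val by omega)
        (show i.val < a by omega) (show 0 < j.val - a by omega) (show j.val - a < b by omega)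
      rw [hcP i (by omega), hcQ j (by omega)]
      exact ⟨fun h => absurd h hne, iff_of_false hnadj (by omega)⟩
  refine ⟨a + b, c, ⟨by omega, fun i j h => ?_, fun i j => ?_⟩, ?_⟩
  · rcases le_total i j with hij | hij
    · exact (key i j hij).1 h
    · exact ((key j i hij).1 h.symm).symm
  · rcases le_total i j with hij | hij
    · exact (key i j hij).2
    · rw [G.adj_comm, (key j i hij).2, or_comm]
  · rintro _ ⟨i, rfl⟩
    exact ⟨⟨i, by omega⟩, hcP ⟨i, by omega⟩ (Nat.lt_succ_iff.mp i.isLt)⟩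

def outsidePathNbhd (G : SimpleGraph V) {k : ℕ} (p : Fin k → V) : Set V :=
  {v | ∀ i, OutsideClosedNbhd G (p i) v}

/-- A walk-based form of "`x–p–y` lies on an induced cycle" (see `IsExtension.inInducedCycle`)
that survives contracting an edge and passing to an induced subgraph. -/
def ReconnectsAround (G : SimpleGraph V) {k : ℕ} (p : Fin k → V) (x y : V) : Prop :=
  ∃ W : G.Walk x y, ∀ v ∈ W.support, v = x ∨ v = y ∨ v ∈ outsidePathNbhd G p

def ExtensionsReconnect (G : SimpleGraph V) {k : ℕ} (p : Fin k → V) : Prop :=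
  ∀ q, IsExtension G p q → ReconnectsAround G p (q 0) (q (Fin.last (k + 1)))

def outsideNbhd (G : SimpleGraph V) (w : V) (F : Set V) : Set V :=
  {v | OutsideClosedNbhd G w v ∧ v ∉ F}

section mergeGraph

variable {w u : V}

theorem mergeGraph_adj_iff_of_ne {a b : V} (ha : a ≠ w) (ha' : a ≠ u) (hb : b ≠ w)
    (hb' : b ≠ u) : (mergeGraph G w u).Adj a b ↔ G.Adj a b := by
  constructor
  · rintro ⟨-, -, -, h | ⟨rfl, -⟩ | ⟨rfl, -⟩⟩
    exacts [h, absurd rfl ha, absurd rfl hb]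
  · exact fun h => ⟨G.ne_of_adj h, ha', hb', Or.inl h⟩

theorem mergeGraph_adj_left_iff (hwu : G.Adj w u) {x : V} (hx : x ≠ w) (hx' : x ≠ u) :
    (mergeGraph G w u).Adj w x ↔ G.Adj w x ∨ G.Adj u x := by
  constructor
  · rintro ⟨-, -, -, h | ⟨-, h⟩ | ⟨rfl, -⟩⟩
    exacts [Or.inl h, Or.inr h, absurd rfl hx]
  · exact fun h => ⟨hx.symm, G.ne_of_adj hwu, hx', h.imp id fun h => Or.inl ⟨rfl, h⟩⟩

theorem mergeGraph_not_adj_right (x : V) : ¬ (mergeGraph G w u).Adj u x :=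
  fun h => h.2.1 rfl

theorem mem_outsideNbhd_mergeGraph_iff (hwu : G.Adj w u) {F : Set V} {v : V} :
    v ∈ outsideNbhd (mergeGraph G w u) w (insert u F) ↔
      v ∈ outsideNbhd G w F ∧ ¬ G.Adj u v := by
  simp only [outsideNbhd, OutsideClosedNbhd, Set.mem_ofPred_eq, Set.mem_insert_iff, not_or]
  constructor
  · rintro ⟨⟨hvw, hadj⟩, hvu, hvF⟩
    rw [mergeGraph_adj_left_iff hwu hvw hvu, not_or] at hadj
    exact ⟨⟨⟨hvw, hadj.1⟩, hvF⟩, hadj.2⟩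
  · rintro ⟨⟨⟨hvw, hwv⟩, hvF⟩, huv⟩
    have hvu : v ≠ u := by rintro rfl; exact hwv hwu
    rw [mergeGraph_adj_left_iff hwu hvw hvu, not_or]
    exact ⟨⟨hvw, hwv, huv⟩, hvu, hvF⟩

theorem mergeGraph_adj_iff_of_mem {F : Set V} {a b : V}
    (ha : a ∈ outsideNbhd (mergeGraph G w u) w (insert u F))
    (hb : b ∈ outsideNbhd (mergeGraph G w u) w (insert u F)) :
    (mergeGraph G w u).Adj a b ↔ G.Adj a b :=
  mergeGraph_adj_iff_of_ne ha.1.1 (fun h => ha.2 (Or.inl h)) hb.1.1 (fun h => hb.2 (Or.inl h))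

theorem isolated_mergeGraph {F : Set V} (hF : ∀ f ∈ F, ∀ x, ¬ G.Adj f x) (hwF : w ∉ F) :
    ∀ f ∈ insert u F, ∀ x, ¬ (mergeGraph G w u).Adj f x := by
  rintro f (rfl | hf) x hfx
  · exact mergeGraph_not_adj_right x hfx
  · rcases hfx.2.2.2 with h | ⟨rfl, -⟩ | ⟨-, h⟩
    exacts [hF f hf x h, hwF hf, hF f hf u h]

theorem insert_outsidePathNbhd_mergeGraph_subset (hwu : G.Adj w u) {F : Set V} {k : ℕ}
    {p : Fin k → V} (hp : ∀ i, p i ∈ outsideNbhd (mergeGraph G w u) w (insert u F)) :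
    insert u (outsidePathNbhd (mergeGraph G w u) p) ⊆ outsidePathNbhd G p := by
  intro v hv i
  have hpG := (mem_outsideNbhd_mergeGraph_iff hwu).mp (hp i)
  obtain rfl | hv := hv
  · exact ⟨fun h => (hp i).2 (Or.inl h.symm), fun h => hpG.2 h.symm⟩
  refine ⟨(hv i).1, fun h => (hv i).2 ?_⟩
  by_cases hvw : v = w
  · subst hvw
    exact absurd h.symm hpG.1.1.2
  · have hvu : v ≠ u := by rintro rfl; exact hpG.2 h.symm
    exact (mergeGraph_adj_iff_of_ne (hp i).1.1 (fun h => (hp i).2 (Or.inl h)) hvw hvu).mpr h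

theorem exists_walk_of_mergeGraph_walk (hwu : G.Adj w u) {a b : V} :
    ∀ W : (mergeGraph G w u).Walk a b, ∃ W' : G.Walk a b, ∀ v ∈ W'.support, v ∈ W.support ∨ v = u
  | .nil => ⟨.nil, fun v hv => Or.inl hv⟩
  | .cons h W => by
    obtain ⟨W', hW'⟩ := exists_walk_of_mergeGraph_walk hwu W
    have hsupp : ∀ v ∈ W'.support, v ∈ (W.cons h).support ∨ v = u := fun v hv =>
      (hW' v hv).imp_left (List.mem_cons_of_mem _)
    rcases h.2.2.2 with hab | ⟨rfl, hub⟩ | ⟨rfl, hau⟩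
    · exact ⟨W'.cons hab, by simpa using hsupp⟩
    · exact ⟨(W'.cons hub).cons hwu, by simpa using hsupp⟩
    · exact ⟨(W'.cons hwu.symm).cons hau, by simpa using hsupp⟩

end mergeGraph

namespace IsExtension

variable {k : ℕ} {p : Fin k → V} {q : Fin (k + 2) → V}

theorem apply_eq (hq : IsExtension G p q) {j : Fin (k + 2)} (h0 : 0 < j.val)
    (hj : j.val < k + 1) : q j = p ⟨j - 1, by omega⟩ := by
  rw [← hq.2]
  exact congrArg q (Fin.ext (show j.val = j.val - 1 + 1 by omega))

theorem comp_embedding_iff {W : Type*} {G' : SimpleGraph W} (f : G ↪g G') :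
    IsExtension G' (f ∘ p) (f ∘ q) ↔ IsExtension G p q := by
  simp only [IsExtension, IsInducedPathOn.comp_embedding_iff, Function.comp_apply,
    f.injective.eq_iff]

theorem exists_eq_or_adj (hk : 1 ≤ k) (hq : IsExtension G p q) (j : Fin (k + 2)) :
    ∃ i, q j = p i ∨ G.Adj (p i) (q j) := by
  rcases Nat.eq_zero_or_pos j.val with h0 | h0
  · refine ⟨⟨0, hk⟩, Or.inr ?_⟩
    have h1 : q ⟨1, by omega⟩ = p ⟨0, hk⟩ :=
      hq.apply_eq (show 0 < 1 by omega) (show 1 < k + 1 by omega)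
    rw [← h1, hq.1.2]
    simp [h0]
  by_cases hl : j.val = k + 1
  · refine ⟨⟨k - 1, by omega⟩, Or.inr ?_⟩
    have hk' : q ⟨k, by omega⟩ = p ⟨k - 1, by omega⟩ :=
      hq.apply_eq (show 0 < k by omega) (show k < k + 1 by omega)
    rw [← hk', hq.1.2]
    simp only
    omega
  · exact ⟨_, Or.inl (hq.apply_eq h0 (by omega))⟩

theorem mem_of_pos_of_lt (hq : IsExtension G p q) {S : Set V} (hp : ∀ i, p i ∈ S)
    {j : Fin (k + 2)} (h0 : 0 < j.val) (hj : j.val < k + 1) : q j ∈ S :=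
  hq.apply_eq h0 hj ▸ hp _

theorem forall_mem (hq : IsExtension G p q) {S : Set V} (hp : ∀ i, p i ∈ S) (h0 : q 0 ∈ S)
    (hl : q (Fin.last (k + 1)) ∈ S) (j : Fin (k + 2)) : q j ∈ S := by
  rcases Nat.eq_zero_or_pos j.val with hj | hj
  · obtain rfl : j = 0 := Fin.ext hj
    exact h0
  by_cases hj' : j.val = k + 1
  · obtain rfl : j = Fin.last _ := Fin.ext hj'
    exact hl
  · exact hq.mem_of_pos_of_lt hp hj (by omega)

theorem mem_outsideNbhd_or_adj (hk : 1 ≤ k) {w : V} {F : Set V} (hF : ∀ f ∈ F, ∀ x, ¬ G.Adj f x)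
    (hq : IsExtension G p q) (hp : ∀ i, p i ∈ outsideNbhd G w F) (j : Fin (k + 2)) :
    q j ∈ outsideNbhd G w F ∨ G.Adj w (q j) := by
  obtain ⟨i, hi | hi⟩ := hq.exists_eq_or_adj hk j
  · exact Or.inl (hi ▸ hp i)
  · refine or_iff_not_imp_right.mpr fun hwq => ⟨⟨fun h => (hp i).1.2 (h ▸ hi).symm, hwq⟩, ?_⟩
    exact fun hqF => hF _ hqF _ hi.symm

theorem inInducedCycle (hk : 1 ≤ k) (hq : IsExtension G p q)
    (h : ReconnectsAround G p (q 0) (q (Fin.last (k + 1)))) : InInducedCycle G q := by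
  obtain ⟨W, hW⟩ := h
  set S : Set V := {v | v = q 0 ∨ v = q (Fin.last (k + 1)) ∨ v ∈ outsidePathNbhd G p}
  have hreach : (G.induce S).Reachable ⟨_, Or.inr (Or.inl rfl)⟩ ⟨_, Or.inl rfl⟩ :=
    (W.induce S hW).reachable.symm
  obtain ⟨R, hR⟩ := hreach.exists_walk_length_eq_dist
  have hQ : IsInducedPathOn G (R.length + 1) (fun i => (R.getVert i).val) :=
    (IsInducedPathOn.comp_embedding_iff (SimpleGraph.Embedding.induce S)).mpr
      (SimpleGraph.Walk.isInducedPathOn_getVert_of_length_eq_dist hR)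
  have hyx : q (Fin.last (k + 1)) ≠ q 0 := fun h => by
    simpa using congrArg Fin.val (hq.1.1 h)
  have hyx' : ¬ G.Adj (q (Fin.last (k + 1))) (q 0) := by
    rw [hq.1.2]; simp only [Fin.val_last, Fin.val_zero]; omega
  have hlen : 2 ≤ R.length := by
    have := hreach.one_lt_dist_of_ne_of_not_adj (by simpa using hyx) (by simpa using hyx')
    omega
  refine hq.1.inInducedCycle_of_closingPath (by omega) hlen hQ (by simp) (by simp)
    fun i j hi0 hik hj0 hjl => ?_
  have hRj : (R.getVert j).val ∈ S := (R.getVert j).2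
  have hj0' : (R.getVert j).val ≠ q 0 := fun h => by
    have := congrArg Fin.val (hQ.1 (a₁ := j) (a₂ := Fin.last _) (by simpa using h))
    simp only [Fin.val_last] at this; omega
  have hjl' : (R.getVert j).val ≠ q (Fin.last (k + 1)) := fun h => by
    have := congrArg Fin.val (hQ.1 (a₁ := j) (a₂ := 0) (by simpa using h))
    simp only [Fin.val_zero] at this; omega
  obtain ⟨hne, hnadj⟩ := (hRj.resolve_left hj0').resolve_left hjl' ⟨i - 1, by omega⟩
  rw [hq.apply_eq hi0 hik]
  exact ⟨hne.symm, hnadj⟩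

end IsExtension

theorem ReconnectsAround.map {W : Type*} {G' : SimpleGraph W} (f : G ↪g G') {k : ℕ}
    {p : Fin k → V} {x y : V} (h : ReconnectsAround G p x y) :
    ReconnectsAround G' (f ∘ p) (f x) (f y) := by
  obtain ⟨R, hR⟩ := h
  refine ⟨R.map f.toHom, fun v hv => ?_⟩
  rw [SimpleGraph.Walk.support_map, List.mem_map] at hv
  obtain ⟨v, hv, rfl⟩ := hv
  rcases hR v hv with rfl | rfl | hv
  · exact Or.inl rfl
  · exact Or.inr (Or.inl rfl)
  · exact Or.inr (Or.inr fun i => ⟨f.injective.ne (hv i).1, by simpa using (hv i).2⟩)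

end

universe u

/-- The strengthened theorem, for all graphs with fewer than `n` vertices outside `F`. -/
def AvoidablePathsExistBelow (k n : ℕ) : Prop :=
  ∀ {V : Type u} [Finite V] (G : SimpleGraph V) (w : V) (F : Set V), Fᶜ.ncard < n →
    (∀ f ∈ F, ∀ x, ¬ G.Adj f x) → w ∉ F →
    (∃ p, IsInducedPathOn G k p ∧ ∀ i, p i ∈ outsideNbhd G w F) →
    ∃ p, IsInducedPathOn G k p ∧ (∀ i, p i ∈ outsideNbhd G w F) ∧ ExtensionsReconnect G p

section induction

variable {V : Type u} [Finite V] {G : SimpleGraph V} {k : ℕ}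

/-- If no induced `P_k` avoids a closed neighbourhood, every induced `P_k` is avoidable for want
of extensions: an extension `x–p–y` would leave `p` minus its first vertex, followed by `y`,
outside `N[x]`. -/
theorem exists_extensionsReconnect {n : ℕ} (ih : AvoidablePathsExistBelow.{u} k n)
    (hV : Nat.card V < n) (hex : ∃ p, IsInducedPathOn G k p) :
    ∃ p, IsInducedPathOn G k p ∧ ExtensionsReconnect G p := by
  by_cases h : ∃ w r, IsInducedPathOn G k r ∧ ∀ i, r i ∈ outsideNbhd G w ∅
  · obtain ⟨w, r, hr, hrw⟩ := h
    obtain ⟨p, hp, -, hpext⟩ := ih G w ∅ (by simpa [Set.ncard_univ] using hV) (by simp) (by simp)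
      ⟨r, hr, hrw⟩
    exact ⟨p, hp, hpext⟩
  · obtain ⟨p, hp⟩ := hex
    refine ⟨p, hp, fun q hq => absurd ⟨q 0, _, hq.1.window_s18 2 le_rfl, fun i => ?_⟩ h⟩
    refine ⟨⟨fun h => ?_, ?_⟩, Set.notMem_empty _⟩
    · simpa using congrArg Fin.val (hq.1.1 h)
    · rw [hq.1.2]
      simp

theorem exists_extensionsReconnect_of_mergeGraph (hk : 1 ≤ k) {w u : V} {F : Set V}
    (ih : AvoidablePathsExistBelow.{u} k Fᶜ.ncard) (hF : ∀ f ∈ F, ∀ x, ¬ G.Adj f x)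
    (hwF : w ∉ F) (hwu : G.Adj w u) {r : Fin k → V} (hr : IsInducedPathOn G k r)
    (hrw : ∀ i, r i ∈ outsideNbhd G w F) (hru : ∀ i, ¬ G.Adj u (r i)) :
    ∃ p, IsInducedPathOn G k p ∧ (∀ i, p i ∈ outsideNbhd G w F) ∧ ExtensionsReconnect G p := by
  set M := mergeGraph G w u
  have hrM : ∀ i, r i ∈ outsideNbhd M w (insert u F) := fun i =>
    (mem_outsideNbhd_mergeGraph_iff hwu).mpr ⟨hrw i, hru i⟩
  have hmeas : (insert u F)ᶜ.ncard < Fᶜ.ncard := by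
    rw [show (insert u F)ᶜ = Fᶜ \ {u} by ext; simp [and_comm]]
    exact Set.ncard_sdiff_singleton_lt_of_mem (fun huF => hF u huF w hwu.symm)
  obtain ⟨Q, hQ, hQM, hQext⟩ := ih M w (insert u F) hmeas (isolated_mergeGraph hF hwF)
    (by simp [hwF, G.ne_of_adj hwu])
    ⟨r, hr.congr fun i j => mergeGraph_adj_iff_of_mem (hrM i) (hrM j), hrM⟩
  have hQG := fun i => (mem_outsideNbhd_mergeGraph_iff hwu).mp (hQM i)
  refine ⟨Q, hQ.congr fun i j => (mergeGraph_adj_iff_of_mem (hQM i) (hQM j)).symm,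
    fun i => (hQG i).1, fun q hq => ?_⟩
  have hqne : ∀ j, q j ≠ w ∧ q j ≠ u := by
    intro j
    obtain ⟨i, hi | hi⟩ := hq.exists_eq_or_adj hk j
    · exact hi ▸ ⟨(hQM i).1.1, fun h => (hQM i).2 (Or.inl h)⟩
    · exact ⟨by rintro rfl; exact (hQG i).1.1.2 hi.symm, by rintro rfl; exact (hQG i).2 hi.symm⟩
  obtain ⟨W, hW⟩ := hQext q ⟨hq.1.congr fun i j =>
    mergeGraph_adj_iff_of_ne (hqne i).1 (hqne i).2 (hqne j).1 (hqne j).2, hq.2⟩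
  obtain ⟨W', hW'⟩ := exists_walk_of_mergeGraph_walk hwu W
  have hfar := insert_outsidePathNbhd_mergeGraph_subset hwu hQM
  refine ⟨W', fun v hv => ?_⟩
  rcases hW' v hv with hv | rfl
  · exact (hW v hv).imp_right (Or.imp_right fun h => hfar (Or.inr h))
  · exact Or.inr (Or.inr (hfar (Or.inl rfl)))

theorem exists_extensionsReconnect_of_forall_adj (hk : 1 ≤ k) {w : V} {F : Set V}
    (ih : AvoidablePathsExistBelow.{u} k Fᶜ.ncard) (hF : ∀ f ∈ F, ∀ x, ¬ G.Adj f x)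
    (hwF : w ∉ F)
    (hsee : ∀ u, G.Adj w u → ∀ r, IsInducedPathOn G k r → (∀ i, r i ∈ outsideNbhd G w F) →
      ∃ i, G.Adj u (r i))
    (hex : ∃ p, IsInducedPathOn G k p ∧ ∀ i, p i ∈ outsideNbhd G w F) :
    ∃ p, IsInducedPathOn G k p ∧ (∀ i, p i ∈ outsideNbhd G w F) ∧ ExtensionsReconnect G p := by
  set D := outsideNbhd G w F
  let ι : G.induce D ↪g G := SimpleGraph.Embedding.induce D
  have hD : Nat.card D < Fᶜ.ncard := by
    rw [Nat.card_coe_set_eq]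
    exact Set.ncard_lt_ncard ⟨fun v hv => hv.2, fun h => (h hwF).1.1 rfl⟩
  obtain ⟨p, hp, hpD⟩ := hex
  obtain ⟨Q, hQ, hQext⟩ := exists_extensionsReconnect ih hD (G := G.induce D)
    ⟨fun i => ⟨p i, hpD i⟩, (IsInducedPathOn.comp_embedding_iff ι).mp hp⟩
  refine ⟨ι ∘ Q, (IsInducedPathOn.comp_embedding_iff ι).mpr hQ, fun i => (Q i).2, fun q hq => ?_⟩
  have hQD : ∀ i, ι (Q i) ∈ D := fun i => (Q i).2
  rcases hq.mem_outsideNbhd_or_adj hk hF hQD 0 with hx | hx <;>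
    rcases hq.mem_outsideNbhd_or_adj hk hF hQD (Fin.last _) with hy | hy
  · let q' : Fin (k + 2) → D := fun j => ⟨q j, hq.forall_mem hQD hx hy j⟩
    exact (hQext q' ((IsExtension.comp_embedding_iff ι).mp hq)).map ι
  · -- `y` sees every admissible `P_k`, but misses the first `k` vertices of `q`
    obtain ⟨i, hi⟩ := hsee _ hy _ (hq.1.window_s18 0 (by omega)) fun i => by
      rcases Nat.eq_zero_or_pos i.val with h0 | h0
      · convert hx using 2
        exact Fin.ext h0
      · exact hq.mem_of_pos_of_lt hQD h0 (by simp)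
    rw [hq.1.2] at hi
    simp only [Fin.val_last] at hi
    omega
  · -- symmetrically, `x` misses the last `k` vertices of `q`
    obtain ⟨i, hi⟩ := hsee _ hx _ (hq.1.window_s18 2 le_rfl) fun i => by
      by_cases hl : i.val = k - 1
      · convert hy using 2
        exact Fin.ext (show i.val + 2 = k + 1 by omega)
      · exact hq.mem_of_pos_of_lt hQD (show 0 < i.val + 2 by omega)
          (show i.val + 2 < k + 1 by omega)
    rw [hq.1.2] at hi
    simp at hi
  · refine ⟨.cons hx.symm (.cons hy .nil), fun v hv => ?_⟩
    simp only [SimpleGraph.Walk.support_cons, SimpleGraph.Walk.support_nil, List.mem_cons,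
      List.not_mem_nil, or_false] at hv
    rcases hv with rfl | rfl | rfl
    · exact Or.inl rfl
    · exact Or.inr (Or.inr fun i => ⟨fun h => (Q i).2.1.1 h.symm, fun h => (Q i).2.1.2 h.symm⟩)
    · exact Or.inr (Or.inl rfl)

end induction

theorem avoidablePathsExistBelow {k : ℕ} (hk : 1 ≤ k) (n : ℕ) :
    AvoidablePathsExistBelow.{u} k n := by
  induction n with
  | zero => exact fun _ _ _ hn => absurd hn (Nat.not_lt_zero _)
  | succ n ih =>
    intro V _ G w F hn hF hwF hex
    have ih' : AvoidablePathsExistBelow k Fᶜ.ncard := fun G w F' hF' => ih G w F' (by omega)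
    by_cases hmerge : ∃ u, G.Adj w u ∧ ∃ r, IsInducedPathOn G k r ∧
        (∀ i, r i ∈ outsideNbhd G w F) ∧ ∀ i, ¬ G.Adj u (r i)
    · obtain ⟨u, hwu, r, hr, hrw, hru⟩ := hmerge
      exact exists_extensionsReconnect_of_mergeGraph hk ih' hF hwF hwu hr hrw hru
    · push Not at hmerge
      exact exists_extensionsReconnect_of_forall_adj hk ih' hF hwF hmerge hex

/-- If a finite graph contains an induced `P_k`, it contains an avoidable induced `P_k`;
consequently containing an induced `P_k` is equivalent to containing an avoidable one. -/
theorem stmt18 [Fintype V] (k : ℕ) (hk : 1 ≤ k) (G : SimpleGraph V) :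
    ((∃ p : Fin k → V, IsInducedPathOn G k p) → ∃ p : Fin k → V, IsAvoidable G p) ∧
    ((∃ p : Fin k → V, IsInducedPathOn G k p) ↔ ∃ p : Fin k → V, IsAvoidable G p) := by
  have main : (∃ p : Fin k → V, IsInducedPathOn G k p) → ∃ p : Fin k → V, IsAvoidable G p := by
    intro hex
    obtain ⟨p, hp, hpext⟩ :=
      exists_extensionsReconnect (G := G) (avoidablePathsExistBelow hk _) (Nat.lt_succ_self _) hex
    exact ⟨p, hp, fun q hq => hq.inInducedCycle hk (hpext q hq)⟩
  exact ⟨main, main, fun ⟨p, hp⟩ => ⟨p, hp.1⟩⟩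
end
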